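/- arXiv:1007.2119 — 3 statements merged into one kernel-verified Lean document; each statement's English description precedes it below -/
import Mathlib

section
/- For 0 < β ≤ 1, the Marčenko–Pastur density f(x) = √((x−a)⁺(b−x)⁺)/(2πx) with a = (1−√β)², b = (1+√β)² integrates to β over (0,∞); hence adding the atom (1−β)·δ₀ gives a probability distribution. -/
/-!
The function `√((x - a) * (b - x)) / x` has the elementary antiderivative
`√((x - a) * (b - x)) + (a + b) / 2 * arcsin ((2x - a - b) / (b - a))
  - √(ab) * arcsin (((a + b) x - 2ab) / ((b - a) x))`,
whose arcsines run from `-π/2` to `π/2` on `[a, b]`, so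
`∫ₐᵇ √((x - a) * (b - x)) / x = π ((a + b) / 2 - √(ab))`.
For `a = (1 - √β)²`, `b = (1 + √β)²` one has `(a + b) / 2 = 1 + β` and `√(ab) = 1 - β`,
so the integral is `2πβ`.
-/

open Real MeasureTheory Set intervalIntegral

theorem HasDerivAt.arcsin_of_one_sub_sq {u : ℝ → ℝ} {u' r x : ℝ} (hu : HasDerivAt u u' x)
    (hr : 0 < r) (h : 1 - u x ^ 2 = r ^ 2) :
    HasDerivAt (fun y => arcsin (u y)) (u' / r) x := by
  have hlt : u x ^ 2 < 1 := by nlinarith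
  have h₁ : u x ≠ -1 := by rintro h'; rw [h'] at hlt; norm_num at hlt
  have h₂ : u x ≠ 1 := by rintro h'; rw [h'] at hlt; norm_num at hlt
  have := (hasDerivAt_arcsin h₁ h₂).comp x hu
  rw [h, sqrt_sq hr.le, one_div_mul_eq_div] at this
  exact this

namespace MarchenkoPastur

-- For `a = 0` the last term vanishes identically, whatever junk value it takes at `x = 0`.
noncomputable def primitive (a b x : ℝ) : ℝ :=
  √((x - a) * (b - x)) + (a + b) / 2 * arcsin ((2 * x - (a + b)) / (b - a))
    - √(a * b) * arcsin (((a + b) * x - 2 * (a * b)) / ((b - a) * x))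

variable {a b x : ℝ}

theorem hasDerivAt_sqrt_mul_sub (hx : x ∈ Ioo a b) :
    HasDerivAt (fun y => √((y - a) * (b - y)))
      ((a + b - 2 * x) / (2 * √((x - a) * (b - x)))) x := by
  have hP : 0 < (x - a) * (b - x) := mul_pos (sub_pos.2 hx.1) (sub_pos.2 hx.2)
  have hp : HasDerivAt (fun y => (y - a) * (b - y)) (a + b - 2 * x) x := by
    refine (((hasDerivAt_id' x).sub_const a).mul
      ((hasDerivAt_id' x).const_sub b)).congr_deriv ?_
    ring
  exact hp.sqrt hP.ne'

theorem hasDerivAt_arcsin_affine (hx : x ∈ Ioo a b) :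
    HasDerivAt (fun y => arcsin ((2 * y - (a + b)) / (b - a)))
      (1 / √((x - a) * (b - x))) x := by
  have hP : 0 < (x - a) * (b - x) := mul_pos (sub_pos.2 hx.1) (sub_pos.2 hx.2)
  have hba : 0 < b - a := by linarith [hx.1, hx.2]
  have hu : HasDerivAt (fun y => (2 * y - (a + b)) / (b - a)) (2 / (b - a)) x := by
    simpa using (((hasDerivAt_id' x).const_mul 2).sub_const (a + b)).div_const (b - a)
  refine (hu.arcsin_of_one_sub_sq (r := 2 * √((x - a) * (b - x)) / (b - a))
    (by positivity) ?_).congr_deriv (by field_simp)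
  field_simp
  rw [sq_sqrt hP.le]
  ring

theorem hasDerivAt_sqrt_mul_mul_arcsin (ha : 0 ≤ a) (hx : x ∈ Ioo a b) :
    HasDerivAt (fun y => √(a * b) * arcsin (((a + b) * y - 2 * (a * b)) / ((b - a) * y)))
      (a * b / (x * √((x - a) * (b - x)))) x := by
  rcases ha.eq_or_lt with rfl | ha
  · simpa using hasDerivAt_const x (0 : ℝ)
  have hP : 0 < (x - a) * (b - x) := mul_pos (sub_pos.2 hx.1) (sub_pos.2 hx.2)
  have hba : 0 < b - a := by linarith [hx.1, hx.2]
  have hx0 : 0 < x := ha.trans hx.1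
  have hb : 0 < b := hx0.trans hx.2
  have hv : HasDerivAt (fun y => ((a + b) * y - 2 * (a * b)) / ((b - a) * y))
      (2 * (a * b) / ((b - a) * x ^ 2)) x := by
    refine ((((hasDerivAt_id' x).const_mul (a + b)).sub_const (2 * (a * b))).div
      ((hasDerivAt_id' x).const_mul (b - a)) (by positivity)).congr_deriv ?_
    field_simp
    ring
  refine ((hv.arcsin_of_one_sub_sq
    (r := 2 * √(a * b) * √((x - a) * (b - x)) / ((b - a) * x)) (by positivity) ?_).const_mul
    √(a * b)).congr_deriv (by field_simp)
  field_simp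
  rw [sq_sqrt hP.le, sq_sqrt (mul_pos ha hb).le]
  ring

theorem hasDerivAt_primitive (ha : 0 ≤ a) (hx : x ∈ Ioo a b) :
    HasDerivAt (primitive a b) (√((x - a) * (b - x)) / x) x := by
  have hP : 0 < (x - a) * (b - x) := mul_pos (sub_pos.2 hx.1) (sub_pos.2 hx.2)
  have hx0 : 0 < x := ha.trans_lt hx.1
  refine (((hasDerivAt_sqrt_mul_sub hx).add ((hasDerivAt_arcsin_affine hx).const_mul
    ((a + b) / 2))).sub (hasDerivAt_sqrt_mul_mul_arcsin ha hx)).congr_deriv ?_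
  field_simp
  rw [sq_sqrt hP.le]
  ring

theorem continuousOn_sqrt_mul_mul_arcsin (ha : 0 ≤ a) (hab : a < b) :
    ContinuousOn (fun y => √(a * b) * arcsin (((a + b) * y - 2 * (a * b)) / ((b - a) * y)))
      (Icc a b) := by
  rcases ha.eq_or_lt with rfl | ha
  · simpa using continuousOn_const
  refine continuousOn_const.mul (continuous_arcsin.comp_continuousOn
    (ContinuousOn.div (by fun_prop) (by fun_prop) fun y hy =>
      mul_ne_zero (sub_ne_zero.2 hab.ne') (ha.trans_le hy.1).ne'))

theorem continuousOn_primitive (ha : 0 ≤ a) (hab : a < b) :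
    ContinuousOn (primitive a b) (Icc a b) :=
  ((continuous_sqrt.comp (by fun_prop)).continuousOn.add
    (continuousOn_const.mul (continuous_arcsin.comp_continuousOn (by fun_prop)))).sub
    (continuousOn_sqrt_mul_mul_arcsin ha hab)

theorem primitive_sub_primitive (ha : 0 ≤ a) (hab : a < b) :
    primitive a b b - primitive a b a = π * ((a + b) / 2 - √(a * b)) := by
  have hba : b - a ≠ 0 := (sub_pos.2 hab).ne'
  have hb : b ≠ 0 := (ha.trans_lt hab).ne'
  have hu_a : (2 * a - (a + b)) / (b - a) = -1 := by field_simp; ring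
  have hu_b : (2 * b - (a + b)) / (b - a) = 1 := by field_simp; ring
  have hv_b : ((a + b) * b - 2 * (a * b)) / ((b - a) * b) = 1 := by field_simp; ring
  have hv_a : √(a * b) * arcsin (((a + b) * a - 2 * (a * b)) / ((b - a) * a))
      = -(√(a * b) * (π / 2)) := by
    rcases ha.eq_or_lt with rfl | ha
    · simp
    rw [show ((a + b) * a - 2 * (a * b)) / ((b - a) * a) = -1 by field_simp; ring,
      arcsin_neg_one, mul_neg]
  simp only [primitive, sub_self, zero_mul, mul_zero, sqrt_zero, hu_a, hu_b, hv_b, hv_a,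
    arcsin_one, arcsin_neg_one]
  ring

theorem integral_sqrt_mul_sub_div (ha : 0 ≤ a) (hab : a < b) :
    ∫ x in a..b, √((x - a) * (b - x)) / x = π * ((a + b) / 2 - √(a * b)) := by
  have hcont := continuousOn_primitive ha hab
  have hderiv : ∀ x ∈ Ioo a b, HasDerivAt (primitive a b) (√((x - a) * (b - x)) / x) x :=
    fun x hx => hasDerivAt_primitive ha hx
  -- for `a = 0` the integrand is unbounded near `0`, but it is a nonnegative derivative
  have hint : IntervalIntegrable (fun x => √((x - a) * (b - x)) / x) volume a b :=
    (intervalIntegrable_iff_integrableOn_Ioc_of_le hab.le).2 <| integrableOn_deriv_of_nonneg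
      hcont hderiv fun x hx => div_nonneg (sqrt_nonneg _) (ha.trans hx.1.le)
  rw [integral_eq_sub_of_hasDerivAt_of_le hab.le hcont hderiv hint,
    primitive_sub_primitive ha hab]

theorem half_add_sub_sqrt_mul_edges {β : ℝ} (h0 : 0 ≤ β) (h1 : β ≤ 1) :
    ((1 - √β) ^ 2 + (1 + √β) ^ 2) / 2 - √((1 - √β) ^ 2 * (1 + √β) ^ 2) = 2 * β := by
  have hs : √β ^ 2 = β := sq_sqrt h0
  have hprod : (1 - √β) * (1 + √β) = 1 - β := by linear_combination -hs
  rw [← mul_pow, sqrt_sq (by rw [hprod]; linarith), hprod]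
  linear_combination hs

end MarchenkoPastur

theorem mp_density_integrates_to_beta (β : ℝ) (hβ0 : 0 < β) (hβ1 : β ≤ 1)
    (a b : ℝ) (ha : a = (1 - Real.sqrt β)^2) (hb : b = (1 + Real.sqrt β)^2)
    (f : ℝ → ℝ)
    (hf : ∀ x, f x = if a ≤ x ∧ x ≤ b then Real.sqrt ((x - a) * (b - x)) / (2 * Real.pi * x) else 0) :
    ∫ x in Set.Ioi (0:ℝ), f x = β := by
  have ha0 : 0 ≤ a := ha ▸ sq_nonneg _
  have hab : a < b := by
    have := sqrt_pos.2 hβ0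
    rw [ha, hb]
    nlinarith
  have hsupp : ∀ x ∉ Ioc a b, f x = 0 := by
    intro x hx
    rw [hf]
    split_ifs with h
    · obtain rfl : a = x := h.1.eq_of_not_lt fun hlt => hx ⟨hlt, h.2⟩
      simp
    · rfl
  calc ∫ x in Ioi 0, f x = ∫ x, f x :=
        setIntegral_eq_integral_of_forall_compl_eq_zero fun x hx =>
          hsupp x fun h => hx (ha0.trans_lt h.1)
    _ = ∫ x in a..b, (2 * π)⁻¹ * (√((x - a) * (b - x)) / x) := by
        rw [integral_of_le hab.le, ← setIntegral_eq_integral_of_forall_compl_eq_zero hsupp]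
        refine setIntegral_congr_fun measurableSet_Ioc fun x hx => ?_
        rw [hf, if_pos ⟨hx.1.le, hx.2⟩]
        ring
    _ = β := by
        rw [intervalIntegral.integral_const_mul, MarchenkoPastur.integral_sqrt_mul_sub_div ha0 hab,
          ha, hb, MarchenkoPastur.half_add_sub_sqrt_mul_edges hβ0.le hβ1]
        field_simp
end

section
/- The S-transform relation for the Marčenko–Pastur law: for β > 0 and z in a neighborhood of 0 with z ≠ 0, −((z+1)/z)·η_MP⁻¹(z+1, β) = 1/(β+z), where η_MP⁻¹ denotes the functional inverse of x ↦ η_MP(x,β) = 1 − φ(x,β)/(4x). Equivalently, η_MP(−z/((z+1)(β+z)), β) = z+1 for −min(1,β) < z < 0. -/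
open Real

noncomputable def mpPhi (x β : ℝ) : ℝ :=
  (Real.sqrt (x * (1 + Real.sqrt β)^2 + 1) - Real.sqrt (x * (1 - Real.sqrt β)^2 + 1))^2

noncomputable def etaMP (x β : ℝ) : ℝ := 1 - mpPhi x β / (4 * x)

theorem mp_S_transform_relation (β : ℝ) (hβ : 0 < β) (z : ℝ)
    (hz1 : -min 1 β < z) (hz2 : z < 0) :
    etaMP (-z / ((z + 1) * (β + z))) β = z + 1 := by
  have hm1 := min_le_left 1 β
  have hm2 := min_le_right 1 β
  have h1 : 0 < z + 1 := by linarith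
  have h2 : 0 < β + z := by linarith
  set s := Real.sqrt β with hsdef
  have hs : s ^ 2 = β := Real.sq_sqrt hβ.le
  have hb : 0 ≤ s := Real.sqrt_nonneg β
  set D := (z + 1) * (β + z) with hDdef
  have hD : 0 < D := mul_pos h1 h2
  have hzb : -z < s := by
    have hz2' : z * z < β := by nlinarith
    have h3 : Real.sqrt (z * z) < s := Real.sqrt_lt_sqrt (mul_self_nonneg z) hz2'
    rwa [Real.sqrt_mul_self_eq_abs, abs_of_neg hz2] at h3
  have ha1 : 0 < s - z := by linarith
  have ha2 : 0 < s + z := by linarith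
  have e1 : -z / D * (1 + s) ^ 2 + 1 = (s - z) ^ 2 / D := by
    field_simp
    linear_combination -(z + 1) * hs
  have e2 : -z / D * (1 - s) ^ 2 + 1 = (s + z) ^ 2 / D := by
    field_simp
    linear_combination -(z + 1) * hs
  have hsD : 0 < Real.sqrt D := Real.sqrt_pos.mpr hD
  have hsq : Real.sqrt D ^ 2 = D := Real.sq_sqrt hD.le
  have r1 : Real.sqrt (-z / D * (1 + s) ^ 2 + 1) = (s - z) / Real.sqrt D := by
    rw [e1, Real.sqrt_div (sq_nonneg _), Real.sqrt_sq ha1.le]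
  have r2 : Real.sqrt (-z / D * (1 - s) ^ 2 + 1) = (s + z) / Real.sqrt D := by
    rw [e2, Real.sqrt_div (sq_nonneg _), Real.sqrt_sq ha2.le]
  have hphi : mpPhi (-z / D) β = 4 * z ^ 2 / D := by
    rw [mpPhi, ← hsdef, r1, r2]
    rw [div_sub_div_same]
    rw [div_pow, hsq]
    ring_nf
  have hz0 : z ≠ 0 := hz2.ne
  rw [etaMP, hphi]
  field_simp
  ring
end

section
/- Stieltjes inversion for an absolutely continuous measure: if μ has a continuous bounded density f on ℝ and S(z) = ∫ f(t)/(t−z) dt for Im z > 0, then for every x ∈ ℝ, lim_{y→0⁺} (1/π)·Im S(x+iy) = f(x). -/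
open Real MeasureTheory Filter Complex
open ProbabilityTheory Topology Set
open scoped NNReal

/-! `(1 / π) Im S (x + y i)` is the integral of `f` against the Cauchy density of location `x` and
scale `y`, i.e. the Poisson kernel of the upper half-plane. These kernels are nonnegative, tend to
zero uniformly away from `x` as `y → 0⁺`, and give mass `(2 / π) arctan (1 / y) → 1` to
`[x - 1, x + 1]`, so they are a family of peak functions at `x`: their integrals against any
integrable function continuous at `x` converge to its value at `x`. -/

lemma NNReal.tendsto_coe_nhdsGT_zero : Tendsto ((↑) : ℝ≥0 → ℝ) (𝓝[>] 0) (𝓝[>] 0) :=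
  tendsto_nhdsWithin_of_tendsto_nhds_of_eventually_within _
    (NNReal.continuous_coe.tendsto' 0 0 rfl |>.mono_left nhdsWithin_le_nhds)
    (eventually_nhdsWithin_of_forall fun _ hγ => hγ)

lemma Real.tendsto_toNNReal_nhdsGT_zero : Tendsto Real.toNNReal (𝓝[>] 0) (𝓝[>] 0) :=
  tendsto_nhdsWithin_of_tendsto_nhds_of_eventually_within _
    (continuous_real_toNNReal.tendsto' 0 0 (by simp) |>.mono_left nhdsWithin_le_nhds)
    (eventually_nhdsWithin_of_forall fun _ hy => by simpa using hy)

lemma cauchyPDFReal_nonneg (x₀ : ℝ) (γ : ℝ≥0) (t : ℝ) : 0 ≤ cauchyPDFReal x₀ γ t := by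
  rw [cauchyPDFReal_def]
  positivity

lemma cauchyPDFReal_le_of_le_abs_sub {x₀ δ t : ℝ} (γ : ℝ≥0) (hδ : 0 < δ) (ht : δ ≤ |t - x₀|) :
    cauchyPDFReal x₀ γ t ≤ π⁻¹ * γ / δ ^ 2 := by
  have hsq : δ ^ 2 ≤ (t - x₀) ^ 2 + γ ^ 2 := by
    nlinarith [sq_abs (t - x₀), sq_nonneg (γ : ℝ), abs_nonneg (t - x₀)]
  rw [cauchyPDFReal_def, div_eq_mul_inv]
  gcongr

lemma tendstoUniformlyOn_cauchyPDFReal_compl {x₀ : ℝ} {u : Set ℝ} (hu : IsOpen u) (hx₀ : x₀ ∈ u) :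
    TendstoUniformlyOn (cauchyPDFReal x₀) 0 (𝓝 0) uᶜ := by
  obtain ⟨δ, hδ, hball⟩ := Metric.isOpen_iff.1 hu x₀ hx₀
  have hbound : Tendsto (fun γ : ℝ≥0 => π⁻¹ * γ / δ ^ 2) (𝓝 0) (𝓝 0) := by
    simpa using ((NNReal.continuous_coe.const_mul π⁻¹).div_const (δ ^ 2)).tendsto 0
  refine Metric.tendstoUniformlyOn_iff.2 fun ε hε => ?_
  filter_upwards [hbound.eventually (gt_mem_nhds hε)] with γ hγ t ht
  have hδt : δ ≤ |t - x₀| := by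
    by_contra! h
    exact ht (hball (by rwa [Metric.mem_ball, Real.dist_eq]))
  rw [Pi.zero_apply, dist_zero_left, Real.norm_of_nonneg (cauchyPDFReal_nonneg ..)]
  exact (cauchyPDFReal_le_of_le_abs_sub γ hδ hδt).trans_lt hγ

lemma intervalIntegral_cauchyPDFReal (x₀ r : ℝ) {γ : ℝ≥0} (hγ : γ ≠ 0) :
    ∫ t in x₀ - r..x₀ + r, cauchyPDFReal x₀ γ t = 2 / π * Real.arctan (r / γ) := by
  have hγ' : (γ : ℝ) ≠ 0 := by simpa using hγ
  simp only [cauchyPDFReal_def', intervalIntegral.integral_const_mul]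
  rw [intervalIntegral.integral_comp_sub_right (fun t => (1 + (t / γ) ^ 2)⁻¹),
    intervalIntegral.integral_comp_div (fun t => (1 + t ^ 2)⁻¹) hγ', integral_inv_one_add_sq]
  simp only [add_sub_cancel_left, sub_sub_cancel_left, neg_div, arctan_neg, smul_eq_mul,
    NNReal.coe_inv]
  field_simp
  ring

lemma tendsto_two_div_pi_mul_arctan_div {r : ℝ} (hr : 0 < r) :
    Tendsto (fun γ : ℝ≥0 => 2 / π * Real.arctan (r / γ)) (𝓝[>] 0) (𝓝 1) := by
  have hdiv : Tendsto (fun γ : ℝ≥0 => r / γ) (𝓝[>] 0) atTop := by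
    simpa [div_eq_mul_inv] using
      (tendsto_inv_nhdsGT_zero.comp NNReal.tendsto_coe_nhdsGT_zero).const_mul_atTop hr
  have harctan : Tendsto (fun γ : ℝ≥0 => Real.arctan (r / γ)) (𝓝[>] 0) (𝓝 (π / 2)) :=
    (tendsto_nhds_of_tendsto_nhdsWithin tendsto_arctan_atTop).comp hdiv
  convert harctan.const_mul (2 / π) using 2
  field_simp

theorem tendsto_integral_cauchyPDFReal_smul {E : Type*} [NormedAddCommGroup E] [NormedSpace ℝ E]
    [CompleteSpace E] {g : ℝ → E} {x₀ : ℝ} (hg : Integrable g) (hgx : ContinuousAt g x₀) :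
    Tendsto (fun γ : ℝ≥0 => ∫ t, cauchyPDFReal x₀ γ t • g t) (𝓝[>] 0) (𝓝 (g x₀)) := by
  have hmass : Tendsto (fun γ : ℝ≥0 => ∫ t in Icc (x₀ - 1) (x₀ + 1), cauchyPDFReal x₀ γ t)
      (𝓝[>] 0) (𝓝 1) := by
    refine (tendsto_two_div_pi_mul_arctan_div one_pos).congr' ?_
    filter_upwards [self_mem_nhdsWithin] with γ (hγ : 0 < γ)
    rw [integral_Icc_eq_integral_Ioc, ← intervalIntegral.integral_of_le (by linarith),
      intervalIntegral_cauchyPDFReal x₀ 1 hγ.ne']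
  exact tendsto_integral_peak_smul_of_integrable_of_tendsto measurableSet_Icc
    (Icc_mem_nhds (by linarith) (by linarith)) measure_Icc_lt_top.ne
    (.of_forall fun γ => cauchyPDFReal_nonneg x₀ γ)
    (fun u hu hx₀ v hv =>
      (tendstoUniformlyOn_cauchyPDFReal_compl hu hx₀ v hv).filter_mono nhdsWithin_le_nhds)
    hmass (.of_forall fun γ => (measurable_cauchyPDFReal x₀ γ).aestronglyMeasurable) hg hgx

lemma integrable_div_ofReal_sub {g : ℝ → ℂ} (hg : Integrable g) {z : ℂ} (hz : z.im ≠ 0) :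
    Integrable fun t : ℝ => g t / (t - z) := by
  have hne : ∀ t : ℝ, (t : ℂ) - z ≠ 0 := fun t h => hz (by simpa using congrArg Complex.im h)
  simp only [div_eq_mul_inv]
  refine hg.mul_bdd (c := |z.im|⁻¹) (by fun_prop (disch := exact hne _)) (.of_forall fun t => ?_)
  rw [norm_inv]
  gcongr
  simpa using abs_im_le_norm ((t : ℂ) - z)

lemma im_ofReal_div_ofReal_sub (a t x : ℝ) (γ : ℝ≥0) :
    ((a : ℂ) / (t - (x + γ * I))).im = π * (cauchyPDFReal x γ t * a) := by
  rw [div_im, cauchyPDFReal_def]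
  simp only [ofReal_im, sub_re, ofReal_re, add_re, mul_re, I_re, mul_zero, I_im, mul_one, sub_self,
    add_zero, zero_mul, normSq_apply, sub_im, add_im, mul_im, zero_add, zero_sub, mul_neg, neg_mul,
    neg_neg, zero_div]
  field_simp

lemma im_integral_ofReal_div_ofReal_sub {g : ℝ → ℝ} (hg : Integrable g) (x : ℝ) {γ : ℝ≥0}
    (hγ : γ ≠ 0) :
    (∫ t : ℝ, (g t : ℂ) / (t - (x + γ * I))).im = π * ∫ t, cauchyPDFReal x γ t * g t := by
  have hint : Integrable fun t : ℝ => (g t : ℂ) / (t - (x + γ * I)) :=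
    integrable_div_ofReal_sub hg.ofReal (by simpa using hγ)
  rw [← imCLM_apply, ← imCLM.integral_comp_comm hint, ← integral_const_mul]
  exact integral_congr_ae (.of_forall fun t => im_ofReal_div_ofReal_sub (g t) t x γ)

theorem stieltjes_inversion_general (f : ℝ → ℝ)
    (hf_cont : Continuous f)
    (hf_int : Integrable f)
    (S : ℂ → ℂ) (hS : ∀ z : ℂ, 0 < z.im → S z = ∫ t : ℝ, (f t : ℂ) / ((t : ℂ) - z))
    (x : ℝ) :
    Tendsto (fun y : ℝ => (1 / Real.pi) * (S (x + y * Complex.I)).im)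
      (nhdsWithin 0 (Set.Ioi 0)) (nhds (f x)) := by
  refine ((tendsto_integral_cauchyPDFReal_smul hf_int hf_cont.continuousAt).comp
    tendsto_toNNReal_nhdsGT_zero).congr' ?_
  filter_upwards [self_mem_nhdsWithin] with y (hy : 0 < y)
  have hγ : y.toNNReal ≠ 0 := by simpa using hy
  have hz : (x : ℂ) + y * I = x + (y.toNNReal : ℝ) * I := by simp [hy.le]
  rw [hS _ (by simpa using hy), hz, im_integral_ofReal_div_ofReal_sub hf_int x hγ, one_div,
    inv_mul_cancel_left₀ pi_ne_zero]
  rfl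

theorem stieltjes_inversion (f : ℝ → ℝ)
    (hf_cont : Continuous f) (hf_bdd : ∃ C, ∀ t, |f t| ≤ C)
    (hf_int : Integrable f) (hf_nonneg : ∀ t, 0 ≤ f t)
    (S : ℂ → ℂ) (hS : ∀ z : ℂ, 0 < z.im → S z = ∫ t : ℝ, (f t : ℂ) / ((t : ℂ) - z))
    (x : ℝ) :
    Tendsto (fun y : ℝ => (1 / Real.pi) * (S (x + y * Complex.I)).im)
      (nhdsWithin 0 (Set.Ioi 0)) (nhds (f x)) :=
  stieltjes_inversion_general f hf_cont hf_int S hS x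
end
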